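/- Fix u ∈ S^{d−1} and define b_j := (1/√d) Σ_{ℓ=1}^d H_{jℓ} D⁽²⁾_{ℓℓ} u_ℓ for j = 1,…,d. Then E[Σ_{j=1}^d b_j⁴] ≤ 3/d. -/

import Mathlib

open MeasureTheory ProbabilityTheory Finset
open scoped ENNReal NNReal

/-- Sylvester/Walsh–Hadamard matrix of order `d` (intended for `d = 2^m`):
`H i j = (-1)^{popcount(i AND j)}`; for `d = 2^m` this satisfies the recursion
`H_{2n} = [[H_n, H_n], [H_n, -H_n]]` with `H₁ = (1)`. -/
def Had (d : ℕ) : Matrix (Fin d) (Fin d) ℝ :=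
  Matrix.of fun i j => (-1 : ℝ) ^ ((Nat.digits 2 (Nat.land i.1 j.1)).sum)

/-- A Boolean encoded as a Rademacher sign. -/
def rsign (b : Bool) : ℝ := if b then 1 else -1

/-- Canonical probability space carrying the two independent layers of i.i.d. Rademacher
signs: the uniform measure on pairs of sign patterns. -/
noncomputable def μsigns (d : ℕ) : Measure ((Fin d → Bool) × (Fin d → Bool)) :=
  (PMF.uniformOfFintype _).toMeasure

/-- `k`-th coordinate of the two-block structured rotation `T(u) = (1/d) H D⁽¹⁾ H D⁽²⁾ u`. -/
noncomputable def Tcoord (d : ℕ) (u : Fin d → ℝ)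
    (ω : (Fin d → Bool) × (Fin d → Bool)) (k : Fin d) : ℝ :=
  (1 / (d : ℝ)) * ∑ j, Had d k j * rsign (ω.1 j) * ∑ ℓ, Had d j ℓ * rsign (ω.2 ℓ) * u ℓ

/-- The structured rotation as a random vector. -/
noncomputable def Tvec (d : ℕ) (u : Fin d → ℝ)
    (ω : (Fin d → Bool) × (Fin d → Bool)) : Fin d → ℝ :=
  fun k => Tcoord d u ω k

/-- Standard Gaussian measure on ℝ^d. -/
noncomputable def stdGaussian (d : ℕ) : Measure (Fin d → ℝ) :=
  Measure.pi fun _ => gaussianReal 0 1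

/-- The uniform (rotation invariant) probability measure on the unit sphere `S^{d-1}`,
realized as the law of a normalized standard Gaussian vector. -/
noncomputable def sphereUniform (d : ℕ) : Measure (Fin d → ℝ) :=
  (stdGaussian d).map fun x i => x i / Real.sqrt (∑ j, x j ^ 2)

/-- Kolmogorov distance between the laws of two real random variables. -/
noncomputable def kolg {Ω₁ Ω₂ : Type*} [MeasurableSpace Ω₁] [MeasurableSpace Ω₂]
    (μ₁ : Measure Ω₁) (μ₂ : Measure Ω₂) (A : Ω₁ → ℝ) (B : Ω₂ → ℝ) : ℝ :=
  ⨆ t : ℝ, |(μ₁ {ω | A ω ≤ t}).toReal - (μ₂ {ω | B ω ≤ t}).toReal|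

/-- `f : ℝ^d → ℝ` is 1-Lipschitz with respect to the Euclidean norm. -/
def EucLip (d : ℕ) (f : (Fin d → ℝ) → ℝ) : Prop :=
  ∀ x y : Fin d → ℝ, |f x - f y| ≤ Real.sqrt (∑ i, (x i - y i) ^ 2)

/-- Wasserstein-1 distance (Kantorovich–Rubinstein dual form) between two laws on ℝ^d,
with respect to the Euclidean norm. -/
noncomputable def W1 (d : ℕ) (μ ν : Measure (Fin d → ℝ)) : ℝ :=
  ⨆ f : {f : (Fin d → ℝ) → ℝ // EucLip d f}, |(∫ x, f.1 x ∂μ) - ∫ x, f.1 x ∂ν|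

/-- The law of a Rademacher random variable. -/
noncomputable def radLaw : Measure ℝ :=
  (2⁻¹ : ℝ≥0∞) • Measure.dirac 1 + (2⁻¹ : ℝ≥0∞) • Measure.dirac (-1)

noncomputable def md (d : ℕ) : ℝ :=
  Real.sqrt (2 / Real.pi) * Real.sqrt ((d : ℝ) / ((d : ℝ) - 1))

/-- `sup_{u ∈ S^{d-1}} W₁(T(u), X(u))` where `X(u)` is uniform on the sphere. -/
noncomputable def supW1T (d : ℕ) : ℝ :=
  ⨆ u : {u : Fin d → ℝ // ∑ ℓ, u ℓ ^ 2 = 1},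
    W1 d ((μsigns d).map (Tvec d u.1)) (sphereUniform d)

/-- First standard basis vector. -/
def e1 (d : ℕ) : Fin d → ℝ := fun i => if i.1 = 0 then 1 else 0

/-- Sign of a real number with the (arbitrary) convention `sgn 0 = 1`. -/
noncomputable def sgn (r : ℝ) : ℝ := if 0 ≤ r then 1 else -1

section aux

lemma rsign_mul_self (b : Bool) : rsign b * rsign b = 1 := by
  cases b <;> norm_num [rsign]

lemma rsign_not (b : Bool) : rsign (!b) = - rsign b := by
  cases b <;> norm_num [rsign]

variable {d : ℕ}

lemma sum_flip (i : Fin d) (g : (Fin d → Bool) → ℝ)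
    (hg : ∀ ω b, g (Function.update ω i b) = g ω) :
    ∑ ω : Fin d → Bool, rsign (ω i) * g ω = 0 := by
  have hinv : Function.Involutive (fun ω : Fin d → Bool => Function.update ω i (!ω i)) := by
    intro ω
    funext k
    by_cases hk : k = i
    · subst hk; simp
    · simp [Function.update_of_ne hk]
  have h := Fintype.sum_equiv hinv.toPerm
      (fun ω => rsign (ω i) * g ω)
      (fun ω => -(rsign (ω i) * g ω)) ?_
  · have h2 : ∑ ω : Fin d → Bool, -(rsign (ω i) * g ω)
        = -∑ ω : Fin d → Bool, rsign (ω i) * g ω := by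
      rw [Finset.sum_neg_distrib]
    rw [h2] at h
    linarith
  · intro ω
    simp only [Function.Involutive.coe_toPerm]
    rw [Function.update_self, hg, rsign_not]
    ring

lemma Tsum_update (c : Fin d → ℝ) (s : Finset (Fin d)) (i : Fin d) (hi : i ∉ s)
    (ω : Fin d → Bool) (b : Bool) :
    ∑ ℓ ∈ s, c ℓ * rsign ((Function.update ω i b) ℓ) = ∑ ℓ ∈ s, c ℓ * rsign (ω ℓ) := by
  refine Finset.sum_congr rfl fun ℓ hℓ => ?_
  rw [Function.update_of_ne (by rintro rfl; exact hi hℓ)]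

lemma sum_eps (c : Fin d → ℝ) (s : Finset (Fin d)) (i : Fin d) (hi : i ∉ s) (r : ℝ) (n : ℕ) :
    ∑ ω : Fin d → Bool, rsign (ω i) * (r * (∑ ℓ ∈ s, c ℓ * rsign (ω ℓ)) ^ n) = 0 :=
  sum_flip i _ fun ω b => by rw [Tsum_update c s i hi]

lemma card_fun_bool : (Fintype.card (Fin d → Bool) : ℝ) = 2 ^ d := by
  simp [Fintype.card_fun]

lemma M2 (c : Fin d → ℝ) (s : Finset (Fin d)) :
    ∑ ω : Fin d → Bool, (∑ ℓ ∈ s, c ℓ * rsign (ω ℓ)) ^ 2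
      = 2 ^ d * ∑ ℓ ∈ s, c ℓ ^ 2 := by
  induction s using Finset.induction_on with
  | empty => simp
  | @insert i s hi ih =>
    have expand : ∀ ω : Fin d → Bool,
        (∑ ℓ ∈ insert i s, c ℓ * rsign (ω ℓ)) ^ 2
          = c i ^ 2 + rsign (ω i) * (2 * c i * (∑ ℓ ∈ s, c ℓ * rsign (ω ℓ)) ^ 1)
            + (∑ ℓ ∈ s, c ℓ * rsign (ω ℓ)) ^ 2 := by
      intro ω
      rw [Finset.sum_insert hi]
      cases hb : ω i <;> simp [rsign] <;> ring
    calc ∑ ω : Fin d → Bool, (∑ ℓ ∈ insert i s, c ℓ * rsign (ω ℓ)) ^ 2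
        = ∑ ω : Fin d → Bool, (c i ^ 2
            + rsign (ω i) * (2 * c i * (∑ ℓ ∈ s, c ℓ * rsign (ω ℓ)) ^ 1)
            + (∑ ℓ ∈ s, c ℓ * rsign (ω ℓ)) ^ 2) :=
          Finset.sum_congr rfl fun ω _ => expand ω
      _ = (∑ _ω : Fin d → Bool, c i ^ 2)
            + (∑ ω : Fin d → Bool, rsign (ω i) * (2 * c i * (∑ ℓ ∈ s, c ℓ * rsign (ω ℓ)) ^ 1))
            + ∑ ω : Fin d → Bool, (∑ ℓ ∈ s, c ℓ * rsign (ω ℓ)) ^ 2 := by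
          rw [Finset.sum_add_distrib, Finset.sum_add_distrib]
      _ = 2 ^ d * c i ^ 2 + 0 + 2 ^ d * ∑ ℓ ∈ s, c ℓ ^ 2 := by
          rw [sum_eps c s i hi, ih, Finset.sum_const, Finset.card_univ, nsmul_eq_mul,
            ← card_fun_bool]
      _ = 2 ^ d * ∑ ℓ ∈ insert i s, c ℓ ^ 2 := by
          rw [Finset.sum_insert hi]; ring

lemma M4 (c : Fin d → ℝ) (s : Finset (Fin d)) :
    ∑ ω : Fin d → Bool, (∑ ℓ ∈ s, c ℓ * rsign (ω ℓ)) ^ 4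
      ≤ 3 * 2 ^ d * (∑ ℓ ∈ s, c ℓ ^ 2) ^ 2 := by
  induction s using Finset.induction_on with
  | empty => simp
  | @insert i s hi ih =>
    have expand : ∀ ω : Fin d → Bool,
        (∑ ℓ ∈ insert i s, c ℓ * rsign (ω ℓ)) ^ 4
          = c i ^ 4 + rsign (ω i) * (4 * c i ^ 3 * (∑ ℓ ∈ s, c ℓ * rsign (ω ℓ)) ^ 1)
            + 6 * c i ^ 2 * (∑ ℓ ∈ s, c ℓ * rsign (ω ℓ)) ^ 2
            + rsign (ω i) * (4 * c i * (∑ ℓ ∈ s, c ℓ * rsign (ω ℓ)) ^ 3)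
            + (∑ ℓ ∈ s, c ℓ * rsign (ω ℓ)) ^ 4 := by
      intro ω
      rw [Finset.sum_insert hi]
      cases hb : ω i <;> simp [rsign] <;> ring
    have hsplit : ∑ ω : Fin d → Bool, (∑ ℓ ∈ insert i s, c ℓ * rsign (ω ℓ)) ^ 4
        = (∑ _ω : Fin d → Bool, c i ^ 4)
          + (∑ ω : Fin d → Bool, rsign (ω i) * (4 * c i ^ 3 * (∑ ℓ ∈ s, c ℓ * rsign (ω ℓ)) ^ 1))
          + ∑ ω : Fin d → Bool, 6 * c i ^ 2 * (∑ ℓ ∈ s, c ℓ * rsign (ω ℓ)) ^ 2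
          + (∑ ω : Fin d → Bool, rsign (ω i) * (4 * c i * (∑ ℓ ∈ s, c ℓ * rsign (ω ℓ)) ^ 3))
          + ∑ ω : Fin d → Bool, (∑ ℓ ∈ s, c ℓ * rsign (ω ℓ)) ^ 4 := by
      rw [← Finset.sum_add_distrib, ← Finset.sum_add_distrib, ← Finset.sum_add_distrib,
        ← Finset.sum_add_distrib]
      exact Finset.sum_congr rfl fun ω _ => expand ω
    have hconst : (∑ _ω : Fin d → Bool, c i ^ 4) = 2 ^ d * c i ^ 4 := by
      rw [Finset.sum_const, Finset.card_univ, nsmul_eq_mul, ← card_fun_bool]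
    have hmid : ∑ ω : Fin d → Bool, 6 * c i ^ 2 * (∑ ℓ ∈ s, c ℓ * rsign (ω ℓ)) ^ 2
        = 6 * c i ^ 2 * (2 ^ d * ∑ ℓ ∈ s, c ℓ ^ 2) := by
      rw [← Finset.mul_sum, M2]
    have hQ : (0:ℝ) ≤ ∑ ℓ ∈ s, c ℓ ^ 2 :=
      Finset.sum_nonneg fun ℓ _ => sq_nonneg _
    rw [hsplit, hconst, hmid, sum_eps c s i hi, sum_eps c s i hi, Finset.sum_insert hi]
    have h2 : (0:ℝ) < 2 ^ d := by positivity
    nlinarith [ih, sq_nonneg (c i), sq_nonneg (c i ^ 2), mul_pos h2 h2]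

end aux

-- STATEMENT 6
theorem stmt6 (m d : ℕ) (hd : d = 2 ^ m) (u : Fin d → ℝ) (hu : ∑ ℓ, u ℓ ^ 2 = 1)
    (b : Fin d → (Fin d → Bool) → ℝ)
    (hb : b = fun j ω => (1 / Real.sqrt d) * ∑ ℓ, Had d j ℓ * rsign (ω ℓ) * u ℓ) :
    ∫ ω, (∑ j, (b j ω) ^ 4) ∂((PMF.uniformOfFintype (Fin d → Bool)).toMeasure) ≤
      3 / (d : ℝ) := by
  subst hb
  have hd1 : 0 < d := by rw [hd]; positivity
  have hd0 : (0:ℝ) < d := by exact_mod_cast hd1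
  have key : ∀ j : Fin d,
      ∑ ω : Fin d → Bool,
          ((1 / Real.sqrt d) * ∑ ℓ, Had d j ℓ * rsign (ω ℓ) * u ℓ) ^ 4
        ≤ (1 / (d:ℝ) ^ 2) * (3 * 2 ^ d) := by
    intro j
    set c : Fin d → ℝ := fun ℓ => Had d j ℓ * u ℓ with hc
    have hT : ∀ ω : Fin d → Bool,
        ∑ ℓ, Had d j ℓ * rsign (ω ℓ) * u ℓ = ∑ ℓ, c ℓ * rsign (ω ℓ) := fun ω =>
      Finset.sum_congr rfl fun ℓ _ => by rw [hc]; ring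
    have hQ : ∑ ℓ, c ℓ ^ 2 = 1 := by
      rw [← hu]
      refine Finset.sum_congr rfl fun ℓ _ => ?_
      have h1 : Had d j ℓ ^ 2 = 1 := by
        show ((-1:ℝ) ^ ((Nat.digits 2 (Nat.land j.1 ℓ.1)).sum)) ^ 2 = 1
        rw [← pow_mul, mul_comm, pow_mul]
        norm_num
      rw [hc]
      simp only []
      rw [mul_pow, h1, one_mul]
    have hpow : (1 / Real.sqrt d) ^ 4 = 1 / (d:ℝ) ^ 2 := by
      rw [div_pow, one_pow]
      congr 1
      rw [show (4:ℕ) = 2 * 2 from rfl, pow_mul, Real.sq_sqrt hd0.le]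
    calc ∑ ω : Fin d → Bool,
            ((1 / Real.sqrt d) * ∑ ℓ, Had d j ℓ * rsign (ω ℓ) * u ℓ) ^ 4
        = (1 / (d:ℝ) ^ 2) * ∑ ω : Fin d → Bool, (∑ ℓ, c ℓ * rsign (ω ℓ)) ^ 4 := by
          rw [Finset.mul_sum]
          exact Finset.sum_congr rfl fun ω _ => by rw [hT, mul_pow, hpow]
      _ ≤ (1 / (d:ℝ) ^ 2) * (3 * 2 ^ d * (∑ ℓ, c ℓ ^ 2) ^ 2) := by
          have := M4 c Finset.univ
          have hnn : (0:ℝ) ≤ 1 / (d:ℝ) ^ 2 := by positivity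
          exact mul_le_mul_of_nonneg_left this hnn
      _ = (1 / (d:ℝ) ^ 2) * (3 * 2 ^ d) := by rw [hQ]; ring
  have hμ : ∀ ω : Fin d → Bool,
      (((PMF.uniformOfFintype (Fin d → Bool)).toMeasure) {ω}).toReal = ((2:ℝ) ^ d)⁻¹ := by
    intro ω
    rw [PMF.toMeasure_apply_singleton _ _ (measurableSet_singleton ω),
      PMF.uniformOfFintype_apply, ENNReal.toReal_inv]
    norm_num [Fintype.card_fun]
  rw [integral_fintype (Integrable.of_finite)]
  simp only [Measure.real, hμ, smul_eq_mul]
  rw [← Finset.mul_sum, Finset.sum_comm]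
  have hsum : ∑ j : Fin d, ∑ ω : Fin d → Bool,
        ((1 / Real.sqrt d) * ∑ ℓ, Had d j ℓ * rsign (ω ℓ) * u ℓ) ^ 4
      ≤ (d:ℝ) * ((1 / (d:ℝ) ^ 2) * (3 * 2 ^ d)) := by
    calc ∑ j : Fin d, ∑ ω : Fin d → Bool,
          ((1 / Real.sqrt d) * ∑ ℓ, Had d j ℓ * rsign (ω ℓ) * u ℓ) ^ 4
        ≤ ∑ _j : Fin d, (1 / (d:ℝ) ^ 2) * (3 * 2 ^ d) :=
          Finset.sum_le_sum fun j _ => key j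
      _ = (d:ℝ) * ((1 / (d:ℝ) ^ 2) * (3 * 2 ^ d)) := by
          rw [Finset.sum_const, Finset.card_univ, Fintype.card_fin, nsmul_eq_mul]
  calc ((2:ℝ) ^ d)⁻¹ * ∑ j : Fin d, ∑ ω : Fin d → Bool,
          ((1 / Real.sqrt d) * ∑ ℓ, Had d j ℓ * rsign (ω ℓ) * u ℓ) ^ 4
      ≤ ((2:ℝ) ^ d)⁻¹ * ((d:ℝ) * ((1 / (d:ℝ) ^ 2) * (3 * 2 ^ d))) := by
        have hnn : (0:ℝ) ≤ ((2:ℝ) ^ d)⁻¹ := by positivity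
        exact mul_le_mul_of_nonneg_left hsum hnn
    _ = 3 / (d : ℝ) := by
        have h2 : ((2:ℝ) ^ d) ≠ 0 := by positivity
        field_simp
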